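/- arXiv:2302.07486 — 6 statements merged into one kernel-verified Lean document; each statement's English description precedes it below -/
import Mathlib

section
/- Let X be a skew-symmetric n×n matrix over a commutative ring whose only nonzero entries are X[i][i+1] = x_i and X[i+1][i] = -x_i for i = 1,…,n-1. If n is even, then det X = ∏_{k=0}^{(n-2)/2} x_{2k+1}^2, i.e. the square of the product of the x_i with odd index i. -/
/-!
Expanding along the first row and then along the first column shows that
`det X = x₁² · det X'`, where `X'` is the matrix of the same shape on `x₃, …, x_{n-1}`
obtained by deleting the first two rows and columns; induct on `n / 2`.
-/

open Matrix

theorem Matrix.det_eq_neg_mul_det_submatrix_succ_succ {R : Type*} [CommRing R] {m : ℕ}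
    (A : Matrix (Fin (m + 2)) (Fin (m + 2)) R)
    (hrow : ∀ j, j ≠ 1 → A 0 j = 0) (hcol : ∀ i, i ≠ 1 → A i 0 = 0) :
    A.det = -(A 0 1 * A 1 0) *
      (A.submatrix (Fin.succ ∘ Fin.succ) (Fin.succ ∘ Fin.succ)).det := by
  rw [det_succ_row_zero, Finset.sum_eq_single 1 (fun j _ hj => by simp [hrow j hj]) (by simp),
    det_succ_column_zero, Finset.sum_eq_single 0 (fun i _ hi => ?_) (by simp)]
  · have : Fin.succAbove (1 : Fin (m + 2)) ∘ Fin.succ = Fin.succ ∘ Fin.succ :=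
      funext Fin.one_succAbove_succ
    simp only [Fin.val_one, Fin.val_zero, pow_one, pow_zero, one_mul, submatrix_apply,
      Fin.succ_zero_eq_one, Fin.one_succAbove_zero, Fin.succAbove_zero, submatrix_submatrix, this]
    ring
  · simp [hcol i.succ (by rwa [Ne, ← Fin.succ_zero_eq_one, Fin.succ_inj])]

section skewTridiagonal

variable {R : Type*} [CommRing R]

def skewTridiagonal (x : ℕ → R) (n : ℕ) : Matrix (Fin n) (Fin n) R :=
  of fun i j => if (j : ℕ) = i + 1 then x (i + 1) else if (i : ℕ) = j + 1 then -x (j + 1) else 0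

theorem skewTridiagonal_submatrix_succ_succ (x : ℕ → R) (m : ℕ) :
    (skewTridiagonal x (m + 2)).submatrix (Fin.succ ∘ Fin.succ) (Fin.succ ∘ Fin.succ) =
      skewTridiagonal (fun k => x (k + 2)) m := by
  ext i j
  simp only [skewTridiagonal, submatrix_apply, of_apply, Function.comp_apply, Fin.val_succ]
  congr 1 <;> grind

theorem det_skewTridiagonal_two_mul (x : ℕ → R) (k : ℕ) :
    (skewTridiagonal x (2 * k)).det = ∏ i ∈ Finset.range k, x (2 * i + 1) ^ 2 := by
  induction k generalizing x with
  | zero => simp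
  | succ k ih =>
    rw [show 2 * (k + 1) = 2 * k + 2 by ring, det_eq_neg_mul_det_submatrix_succ_succ _ ?_ ?_,
      skewTridiagonal_submatrix_succ_succ, ih, Finset.prod_range_succ']
    · simp only [skewTridiagonal, of_apply, Fin.val_zero, Fin.val_one, zero_add, Nat.reduceAdd,
        OfNat.zero_ne_ofNat, ↓reduceIte]
      ring_nf
    · intro j hj
      have : (j : ℕ) ≠ 1 := fun h => hj (Fin.ext h)
      simp [skewTridiagonal, this]
    · intro i hi
      have : (i : ℕ) ≠ 1 := fun h => hi (Fin.ext h)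
      simp [skewTridiagonal, this]

end skewTridiagonal

/-- A tridiagonal skew-symmetric matrix of even order `n` has
determinant `∏_{k=0}^{(n-2)/2} x_{2k+1}^2`, the square of the product of the
superdiagonal entries with odd (one-based) index. -/
theorem tridiagonal_skew_det_of_even
    {R : Type*} [CommRing R] (n : ℕ) (hn : Even n) (x : ℕ → R)
    (X : Matrix (Fin n) (Fin n) R)
    (hX : ∀ i j : Fin n,
      X i j = if (j : ℕ) = (i : ℕ) + 1 then x ((i : ℕ) + 1)
        else if (i : ℕ) = (j : ℕ) + 1 then - x ((j : ℕ) + 1) else 0) :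
    X.det = ∏ k ∈ Finset.range (n / 2), (x (2 * k + 1)) ^ 2 := by
  obtain ⟨k, rfl⟩ := hn
  have hX' : X = skewTridiagonal x (k + k) := ext hX
  rw [hX', ← two_mul, det_skewTridiagonal_two_mul, Nat.mul_div_cancel_left k two_pos]
end

section
/- Let n = 2r+1 and X_3 be the tridiagonal skew-symmetric matrix of order n with superdiagonal entries x_{12}, x_{23}, …, x_{n−1,n}. Then the ideal Pf_{n−1}(X_3) of maximal-order Pfaffians of X_3 is the monomial ideal generated by the r+1 squarefree monomials p_1 = ∏_{k=1}^r x_{2k,2k+1} and, for i = 2p+1 with 1 ≤ p ≤ r, p_i = x_{12} · ∏_{odd j with 3 ≤ j < i} x_{j,j+1} · ∏_{even k with i < k ≤ 2r} x_{k,k+1}. -/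
open MvPolynomial

variable {K : Type*} [Field K]

/-- The variable `x_{v+1, v+2}` (one-based) of the tridiagonal
skew-symmetric matrix, i.e. the `v`-th superdiagonal variable (zero-based),
in `K[x_{12}, x_{23}, …, x_{n−1,n}]` with `n = 2r+1`. -/
noncomputable def xvar (r : ℕ) (K : Type*) [Field K] (v : ℕ) :
    MvPolynomial (Fin (2 * r)) K :=
  if h : v < 2 * r then X ⟨v, h⟩ else 1

/-- The monomial generators of the Pfaffian ideal of the tridiagonal
skew-symmetric matrix: `p_1 = ∏_{k=1}^r x_{2k,2k+1}`, and for `i = 2p+1`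
with `1 ≤ p ≤ r`, `p_i = x_{12} · ∏_{odd j, 3 ≤ j < i} x_{j,j+1} ·
∏_{even k, i < k ≤ 2r} x_{k,k+1}` (here indexed by `j = 0` for `p_1` and
`j = p` for `p_{2p+1}`). -/
noncomputable def pgen (r : ℕ) (K : Type*) [Field K] (j : Fin (r + 1)) :
    MvPolynomial (Fin (2 * r)) K :=
  if j.val = 0 then ∏ t ∈ Finset.range r, xvar r K (2 * t + 1)
  else
    xvar r K 0 * (∏ t ∈ Finset.Ico 1 j.val, xvar r K (2 * t)) *
      ∏ t ∈ Finset.Ico j.val r, xvar r K (2 * t + 1)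

/-- The Pfaffian of a `2m × 2m` matrix over a `ℚ`-algebra, via the summation
formula `Pf(M) = (1/(2^m m!)) ∑_σ sgn(σ) ∏_i M_{σ(2i-1), σ(2i)}`. -/
noncomputable def pfaffian (m : ℕ) {R : Type*} [CommRing R] [Algebra ℚ R]
    (M : Matrix (Fin (2 * m)) (Fin (2 * m)) R) : R :=
  ((2 ^ m * Nat.factorial m : ℚ)⁻¹) •
    ∑ σ : Equiv.Perm (Fin (2 * m)),
      ((Equiv.Perm.sign σ : ℤ) : R) *
        ∏ i : Fin m,
          M (σ ⟨2 * i.val, by have := i.isLt; omega⟩)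
            (σ ⟨2 * i.val + 1, by have := i.isLt; omega⟩)

/-- The tridiagonal skew-symmetric matrix `X₃` of order `n = 2r+1`, with
`(X₃)_{i,i+1} = x_{i,i+1}`, `(X₃)_{i+1,i} = −x_{i,i+1}`, all other entries
zero. -/
noncomputable def triSkew (r : ℕ) (K : Type*) [Field K] :
    Matrix (Fin (2 * r + 1)) (Fin (2 * r + 1)) (MvPolynomial (Fin (2 * r)) K) :=
  fun i j =>
    if (j : ℕ) = (i : ℕ) + 1 then xvar r K i.val
    else if (i : ℕ) = (j : ℕ) + 1 then - xvar r K j.val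
    else 0

/-- `Pf_{\bar l}(X₃)`: the Pfaffian of the submatrix of `X₃` obtained by
deleting row and column `l`. -/
noncomputable def pfBarTri (r : ℕ) (K : Type*) [Field K] [CharZero K]
    (l : Fin (2 * r + 1)) : MvPolynomial (Fin (2 * r)) K :=
  pfaffian r ((triSkew r K).submatrix l.succAbove l.succAbove)

/-!
In the Pfaffian expansion of a skew-symmetric matrix supported on the edges of a path, a
permutation contributes only if it carries the pairing `{2i, 2i+1}` onto a perfect matching of the
path. That matching is unique, so the contributing permutations form the hyperoctahedral group,
of order `2^r r!`, and each contributes `∏ N_{2i,2i+1}`. Deleting row and column `l` of `X₃`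
leaves a matrix of this kind, so `Pf_{\bar l}(X₃)` is a monomial: for odd `l` (zero-based) the
factor at the gap is `0`, and for `l = 2p` it is the generator `pgen r K ⟨p, _⟩`.
-/

open Equiv Finset Nat SimpleGraph Matrix

def finPairEquiv (r : ℕ) : Fin r × Bool ≃ Fin (2 * r) where
  toFun p := ⟨2 * p.1 + p.2.toNat, by have := p.2.toNat_le; omega⟩
  invFun x := (⟨x / 2, by omega⟩, decide (x.val % 2 = 1))
  left_inv := by
    rintro ⟨⟨i, hi⟩, _ | _⟩ <;> simp [Fin.ext_iff]; omega
  right_inv := by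
    rintro ⟨x, hx⟩
    by_cases h : x % 2 = 1 <;> simp [h, Fin.ext_iff] <;> omega

@[simp]
lemma val_finPairEquiv {r : ℕ} (p : Fin r × Bool) :
    (finPairEquiv r p : ℕ) = 2 * p.1 + p.2.toNat := rfl

lemma val_finPairEquiv_false {r : ℕ} (i : Fin r) : (finPairEquiv r (i, false) : ℕ) = 2 * i :=
  rfl

lemma val_finPairEquiv_true {r : ℕ} (i : Fin r) : (finPairEquiv r (i, true) : ℕ) = 2 * i + 1 :=
  rfl

def pairSwap (r : ℕ) : Perm (Fin (2 * r)) :=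
  (finPairEquiv r).permCongr (prodCongrRight fun _ => boolNot)

@[simp]
lemma pairSwap_finPairEquiv {r : ℕ} (i : Fin r) (b : Bool) :
    pairSwap r (finPairEquiv r (i, b)) = finPairEquiv r (i, !b) := by
  simp [pairSwap, permCongr_apply]

@[simp]
lemma pairSwap_pairSwap {r : ℕ} (x : Fin (2 * r)) : pairSwap r (pairSwap r x) = x := by
  obtain ⟨⟨i, b⟩, rfl⟩ := (finPairEquiv r).surjective x
  simp

/-- The hyperoctahedral group, acting on the pairs `{2i, 2i+1}`. -/
def pairPerm (r : ℕ) (fε : Perm (Fin r) × (Fin r → Bool)) : Perm (Fin (2 * r)) :=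
  (finPairEquiv r).permCongr
    (prodCongrLeft (fun _ => fε.1) * prodCongrRight fun i => if fε.2 i then boolNot else 1)

@[simp]
lemma pairPerm_finPairEquiv {r : ℕ} (f : Perm (Fin r)) (ε : Fin r → Bool) (i : Fin r)
    (b : Bool) :
    pairPerm r (f, ε) (finPairEquiv r (i, b)) = finPairEquiv r (f i, ε i ^^ b) := by
  simp only [pairPerm, permCongr_apply, symm_apply_apply, Perm.mul_apply, prodCongrRight_apply,
    prodCongrLeft_apply]
  by_cases h : ε i <;> simp [h]

lemma sign_boolNot : Perm.sign boolNot = -1 := by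
  decide

lemma sign_pairPerm {r : ℕ} (f : Perm (Fin r)) (ε : Fin r → Bool) :
    Perm.sign (pairPerm r (f, ε)) = ∏ i, Perm.sign (if ε i then boolNot else 1) := by
  rw [pairPerm, Perm.sign_permCongr, map_mul, Perm.sign_prodCongrLeft, Perm.sign_prodCongrRight,
    Fintype.prod_bool, Int.units_mul_self, one_mul]

lemma pairPerm_injective (r : ℕ) : Function.Injective (pairPerm r) := by
  rintro ⟨f, ε⟩ ⟨f', ε'⟩ h
  have key (i : Fin r) : f i = f' i ∧ ε i = ε' i := by
    simpa using congr($h (finPairEquiv r (i, false)))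
  simp only [Prod.mk.injEq]
  exact ⟨Equiv.ext fun i => (key i).1, funext fun i => (key i).2⟩

lemma exists_pairPerm_eq_of_commute {r : ℕ} {σ : Perm (Fin (2 * r))}
    (hσ : Commute σ (pairSwap r)) : ∃ fε, pairPerm r fε = σ := by
  set g : Fin r → Fin r × Bool := fun i => (finPairEquiv r).symm (σ (finPairEquiv r (i, false)))
  have hg (i : Fin r) (b : Bool) :
      σ (finPairEquiv r (i, b)) = finPairEquiv r ((g i).1, (g i).2 ^^ b) := by
    cases b
    · simp [g]
    · have := congr($hσ (finPairEquiv r (i, false)))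
      simp only [Perm.mul_apply, pairSwap_finPairEquiv, Bool.not_false] at this
      simp [this, g, ← pairSwap_finPairEquiv]
  have hinj : Function.Injective fun i => (g i).1 := by
    intro i j hij
    -- a point of the pair `j` is sent to `σ (2i)`, so `j = i`
    have := hg j ((g j).2 ^^ (g i).2)
    simp only [← hij] at this
    simp only [← Bool.xor_assoc, Bool.xor_self, Bool.false_xor, Prod.mk.eta, g,
      Equiv.apply_symm_apply, σ.apply_eq_iff_eq, EmbeddingLike.apply_eq_iff_eq] at this
    exact (congrArg Prod.fst this).symm
  refine ⟨(.ofBijective _ hinj.bijective_of_finite, fun i => (g i).2), Equiv.ext fun x => ?_⟩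
  obtain ⟨⟨i, b⟩, rfl⟩ := (finPairEquiv r).surjective x
  simp [hg]

/-- The path on `2r` vertices has exactly one perfect matching. -/
lemma eq_pairSwap_of_involutive_of_adj {r : ℕ} {M : Fin (2 * r) → Fin (2 * r)}
    (hM : Function.Involutive M) (hadj : ∀ x, (pathGraph (2 * r)).Adj x (M x)) :
    M = pairSwap r := by
  have heven (i : Fin r) : M (finPairEquiv r (i, false)) = finPairEquiv r (i, true) := by
    obtain ⟨i, hi⟩ := i
    induction i using Nat.strong_induction_on with
    | _ i ih =>
      have h := pathGraph_adj.mp (hadj (finPairEquiv r (⟨i, hi⟩, false)))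
      simp only [val_finPairEquiv_false] at h
      rcases h with h | h
      · ext; simp; omega
      · exfalso
        obtain ⟨k, rfl⟩ : ∃ k, i = k + 1 := ⟨i - 1, by omega⟩
        have hprev := ih k (by omega) (by omega)
        have hsame : M (finPairEquiv r (⟨k + 1, hi⟩, false)) =
            M (finPairEquiv r (⟨k, by omega⟩, false)) := by
          rw [hprev]; ext; simp; omega
        simpa [Fin.ext_iff] using hM.injective hsame
  funext x
  obtain ⟨⟨i, _ | _⟩, rfl⟩ := (finPairEquiv r).surjective x
  · rw [heven, pairSwap_finPairEquiv, Bool.not_false]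
  · rw [← heven, hM, heven, pairSwap_finPairEquiv, Bool.not_true]

section Pfaffian

variable {r : ℕ} {R : Type*} [CommRing R]

def pfaffianTerm (N : Matrix (Fin (2 * r)) (Fin (2 * r)) R) (σ : Perm (Fin (2 * r))) : R :=
  (Perm.sign σ : ℤ) *
    ∏ i : Fin r, N (σ (finPairEquiv r (i, false))) (σ (finPairEquiv r (i, true)))

lemma pfaffian_eq_smul_sum_pfaffianTerm [Algebra ℚ R]
    (N : Matrix (Fin (2 * r)) (Fin (2 * r)) R) :
    pfaffian r N = (2 ^ r * r ! : ℚ)⁻¹ • ∑ σ, pfaffianTerm N σ :=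
  rfl

lemma pfaffianTerm_pairPerm {N : Matrix (Fin (2 * r)) (Fin (2 * r)) R} (hskew : Nᵀ = -N)
    (fε : Perm (Fin r) × (Fin r → Bool)) :
    pfaffianTerm N (pairPerm r fε) =
      ∏ i, N (finPairEquiv r (i, false)) (finPairEquiv r (i, true)) := by
  obtain ⟨f, ε⟩ := fε
  let c (i : Fin r) : R := (Perm.sign (if ε i then boolNot else 1) : ℤ)
  have hentry (i : Fin r) :
      N (pairPerm r (f, ε) (finPairEquiv r (i, false)))
          (pairPerm r (f, ε) (finPairEquiv r (i, true))) =
        c i * N (finPairEquiv r (f i, false)) (finPairEquiv r (f i, true)) := by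
    rw [pairPerm_finPairEquiv, pairPerm_finPairEquiv]
    by_cases h : ε i
    · simp only [c, h, if_true, sign_boolNot, Bool.true_xor, Bool.not_false, Bool.not_true,
        Units.val_neg, Units.val_one, Int.cast_neg, Int.cast_one, neg_one_mul]
      exact congr_fun₂ hskew _ _
    · simp [c, h]
  -- each flipped pair contributes its sign twice: once to `sign`, once through skew-symmetry
  have hsq (i : Fin r) : c i * c i = 1 := by
    rw [← Int.cast_mul, ← Units.val_mul, Int.units_mul_self, Units.val_one, Int.cast_one]
  rw [pfaffianTerm, sign_pairPerm, Units.coe_prod, Int.cast_prod,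
    prod_congr rfl fun i _ => hentry i, prod_mul_distrib, ← mul_assoc, ← prod_mul_distrib,
    prod_congr rfl fun i _ => hsq i, prod_const_one, one_mul]
  exact Equiv.prod_comp f fun j => N (finPairEquiv r (j, false)) (finPairEquiv r (j, true))

lemma commute_pairSwap_of_pfaffianTerm_ne_zero {N : Matrix (Fin (2 * r)) (Fin (2 * r)) R}
    (hsupp : ∀ i j, N i j ≠ 0 → (pathGraph (2 * r)).Adj i j) {σ : Perm (Fin (2 * r))}
    (hσ : pfaffianTerm N σ ≠ 0) : Commute σ (pairSwap r) := by
  have hadj (i : Fin r) :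
      (pathGraph (2 * r)).Adj (σ (finPairEquiv r (i, false))) (σ (finPairEquiv r (i, true))) :=
    hsupp _ _ fun h => hσ (mul_eq_zero_of_right _ (prod_eq_zero (mem_univ i) h))
  have hconj : ⇑(σ * pairSwap r * σ⁻¹) = pairSwap r := by
    apply eq_pairSwap_of_involutive_of_adj
    · intro x
      simp
    · intro x
      obtain ⟨⟨i, b⟩, rfl⟩ : ∃ p, σ (finPairEquiv r p) = x :=
        ⟨(finPairEquiv r).symm (σ.symm x), by simp⟩
      cases b
      · simpa using hadj i
      · simpa using (hadj i).symm
  exact (mul_inv_eq_iff_eq_mul.mp (DFunLike.coe_injective hconj))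

theorem pfaffian_eq_prod_of_adj [Algebra ℚ R] {N : Matrix (Fin (2 * r)) (Fin (2 * r)) R}
    (hskew : Nᵀ = -N) (hsupp : ∀ i j, N i j ≠ 0 → (pathGraph (2 * r)).Adj i j) :
    pfaffian r N = ∏ i, N (finPairEquiv r (i, false)) (finPairEquiv r (i, true)) := by
  have hsum : ∑ σ, pfaffianTerm N σ = ∑ fε, pfaffianTerm N (pairPerm r fε) := by
    refine (sum_of_injOn _ (pairPerm_injective r).injOn (by simp) ?_ fun _ _ => rfl).symm
    intro σ _ hσ
    by_contra h
    obtain ⟨fε, rfl⟩ :=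
      exists_pairPerm_eq_of_commute (commute_pairSwap_of_pfaffianTerm_ne_zero hsupp h)
    exact hσ ⟨fε, by simp, rfl⟩
  rw [pfaffian_eq_smul_sum_pfaffianTerm, hsum]
  simp only [pfaffianTerm_pairPerm hskew]
  rw [sum_const, Finset.card_univ, Fintype.card_prod, Fintype.card_perm, Fintype.card_fun,
    Fintype.card_bool, Fintype.card_fin]
  rw [← Nat.cast_smul_eq_nsmul ℚ, smul_smul, Nat.cast_mul, Nat.cast_pow, Nat.cast_ofNat,
    mul_comm (r ! : ℚ), inv_mul_cancel₀ (by positivity), one_smul]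

end Pfaffian

lemma Fin.val_succAbove_eq_ite {n : ℕ} (l : Fin (n + 1)) (i : Fin n) :
    (l.succAbove i : ℕ) = if i.val < l.val then i.val else i.val + 1 := by
  simp [Fin.succAbove, Fin.lt_def, apply_ite Fin.val]

lemma pathGraph_adj_of_adj_succAbove {n : ℕ} (l : Fin (n + 1)) {i j : Fin n}
    (h : (pathGraph (n + 1)).Adj (l.succAbove i) (l.succAbove j)) : (pathGraph n).Adj i j := by
  rw [pathGraph_adj, Fin.val_succAbove_eq_ite, Fin.val_succAbove_eq_ite] at h
  rw [pathGraph_adj]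
  split_ifs at h <;> omega

section Tridiagonal

variable (r : ℕ)

lemma triSkew_transpose : (triSkew r K)ᵀ = -triSkew r K := by
  refine Matrix.ext fun a b => ?_
  simp only [transpose_apply, Matrix.neg_apply, triSkew]
  split_ifs <;> first | omega | simp

lemma pathGraph_adj_of_triSkew_ne_zero {a b : Fin (2 * r + 1)} (h : triSkew r K a b ≠ 0) :
    (pathGraph (2 * r + 1)).Adj a b := by
  rw [pathGraph_adj]
  by_contra hab
  exact h (by simp only [triSkew]; split_ifs <;> first | rfl | omega)

lemma pfBarTri_eq_prod [CharZero K] (l : Fin (2 * r + 1)) :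
    pfBarTri r K l = ∏ i : Fin r,
      if l.val ≤ 2 * i.val then xvar r K (2 * i + 1)
      else if l.val = 2 * i + 1 then 0 else xvar r K (2 * i) := by
  rw [pfBarTri, pfaffian_eq_prod_of_adj (N := (triSkew r K).submatrix l.succAbove l.succAbove)
    (by rw [transpose_submatrix, triSkew_transpose]; rfl)
    fun i j h => pathGraph_adj_of_adj_succAbove l (pathGraph_adj_of_triSkew_ne_zero r h)]
  refine prod_congr rfl fun i _ => ?_
  have h0 : (l.succAbove (finPairEquiv r (i, false)) : ℕ) =
      if l.val ≤ 2 * i.val then 2 * i.val + 1 else 2 * i.val := by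
    rw [Fin.val_succAbove_eq_ite, val_finPairEquiv_false]
    split_ifs <;> omega
  have h1 : (l.succAbove (finPairEquiv r (i, true)) : ℕ) =
      if l.val ≤ 2 * i.val + 1 then 2 * i.val + 2 else 2 * i.val + 1 := by
    rw [Fin.val_succAbove_eq_ite, val_finPairEquiv_true]
    split_ifs <;> omega
  simp only [submatrix_apply, triSkew, h0, h1]
  split_ifs <;> first | rfl | omega

variable [CharZero K]

lemma pfBarTri_odd (p : ℕ) (hp : p < r) : pfBarTri r K ⟨2 * p + 1, by omega⟩ = 0 := by
  rw [pfBarTri_eq_prod]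
  exact prod_eq_zero (mem_univ ⟨p, hp⟩) (by simp)

lemma pfBarTri_even (p : ℕ) (hp : p ≤ r) :
    pfBarTri r K ⟨2 * p, by omega⟩ = pgen r K ⟨p, by omega⟩ := by
  have hfactor (i : Fin r) : (if 2 * p ≤ 2 * i.val then xvar r K (2 * i + 1)
      else if 2 * p = 2 * i.val + 1 then 0 else xvar r K (2 * i)) =
      if p ≤ i.val then xvar r K (2 * i + 1) else xvar r K (2 * i) := by
    split_ifs <;> first | rfl | omega
  rw [pfBarTri_eq_prod, prod_congr rfl fun i _ => hfactor i,
    Fin.prod_univ_eq_prod_range fun k => if p ≤ k then xvar r K (2 * k + 1) else xvar r K (2 * k),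
    range_eq_Ico, ← prod_Ico_consecutive _ (zero_le p) hp,
    prod_congr rfl fun k hk => if_neg (by have := (Finset.mem_Ico.mp hk).2; omega),
    prod_congr rfl fun k hk => if_pos (Finset.mem_Ico.mp hk).1]
  rcases Nat.eq_zero_or_pos p with rfl | hp0
  · rw [pgen, if_pos rfl, Finset.Ico_self, prod_empty, one_mul, Finset.range_eq_Ico]
  · rw [pgen, if_neg hp0.ne', prod_eq_prod_Ico_succ_bot hp0, mul_zero]

end Tridiagonal

/-- the ideal `Pf_{n−1}(X₃)` of maximal-order Pfaffians of the
tridiagonal skew-symmetric matrix `X₃` of order `n = 2r+1` equals the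
monomial ideal generated by the `r+1` squarefree monomials
`p_1 = ∏_{k=1}^r x_{2k,2k+1}` and, for `i = 2p+1` with `1 ≤ p ≤ r`,
`p_i = x_{12} · ∏_{odd j, 3 ≤ j < i} x_{j,j+1} · ∏_{even k, i < k ≤ 2r} x_{k,k+1}`. -/
theorem pfaffianIdeal_tridiagonal_eq_monomialIdeal
    (r : ℕ) (K : Type*) [Field K] [CharZero K] :
    Ideal.span {p : MvPolynomial (Fin (2 * r)) K |
        ∃ l : Fin (2 * r + 1), p = pfBarTri r K l} =
      Ideal.span (Set.range (pgen r K)) := by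
  apply le_antisymm <;> rw [Ideal.span_le]
  · rintro _ ⟨⟨l, hl⟩, rfl⟩
    obtain ⟨p, rfl | rfl⟩ := Nat.even_or_odd' l
    · rw [pfBarTri_even r p (by omega)]
      exact Ideal.subset_span ⟨_, rfl⟩
    · rw [pfBarTri_odd r p (by omega)]
      exact zero_mem _
  · rintro _ ⟨⟨p, hp⟩, rfl⟩
    rw [← pfBarTri_even r p (by omega)]
    exact Ideal.subset_span ⟨_, rfl⟩
end

section
/- Let n = 2r+1 and let p_1, p_3, p_5, …, p_{2r+1} be the maximal-order Pfaffians of the tridiagonal skew-symmetric matrix X_3 (as squarefree monomials in x_{12}, …, x_{n−1,n}). Then this sequence of monomials is of interval type: for all indices i < j in the sequence and any variable x dividing gcd(p_i, p_j), x divides p_k for every k with i ≤ k ≤ j. -/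
open MvPolynomial

variable {K : Type*} [Field K]

/-!
The variables are prime, so a variable divides `p_j` iff it is one of its factors. With zero-based
index `v`, an even-indexed variable is a factor of `p_j` exactly when `v < 2j`, an odd-indexed one
exactly when `2j ≤ v`. Hence the set of `j` with `x_v ∣ p_j` is an up-set or a down-set of
`{0, …, r}`, and in particular an interval.
-/

lemma X_dvd_xvar_iff {r : ℕ} {v : Fin (2 * r)} {u : ℕ} :
    (X v : MvPolynomial (Fin (2 * r)) K) ∣ xvar r K u ↔ v.val = u := by
  unfold xvar
  split_ifs with hu
  · rw [X_dvd_X, Fin.ext_iff]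
  · exact iff_of_false (fun h => X_prime.not_isUnit (isUnit_of_dvd_one h)) (by omega)

lemma X_dvd_pgen_iff {r : ℕ} {j : Fin (r + 1)} {v : Fin (2 * r)} :
    (X v : MvPolynomial (Fin (2 * r)) K) ∣ pgen r K j ↔
      (Even v.val → v.val < 2 * j.val) ∧ (Odd v.val → 2 * j.val ≤ v.val) := by
  have hp : Prime (X v : MvPolynomial (Fin (2 * r)) K) := X_prime
  have hv := v.isLt
  simp only [Nat.even_iff, Nat.odd_iff]
  unfold pgen
  split_ifs with hj
  · simp only [hp.dvd_finsetProd_iff, X_dvd_xvar_iff, Finset.mem_range, hj]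
    constructor
    · rintro ⟨t, ht, hvt⟩
      omega
    · rintro ⟨heven, -⟩
      exact ⟨v.val / 2, by omega, by omega⟩
  · simp only [hp.dvd_mul, hp.dvd_finsetProd_iff, X_dvd_xvar_iff, Finset.mem_Ico]
    constructor
    · rintro ((h | ⟨t, ht, hvt⟩) | ⟨t, ht, hvt⟩) <;> omega
    · rintro ⟨heven, hodd⟩
      rcases Nat.mod_two_eq_zero_or_one v.val with h | h
      · rcases Nat.eq_zero_or_pos v.val with h0 | h0
        · exact .inl (.inl h0)
        · exact .inl (.inr ⟨v.val / 2, by omega, by omega⟩)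
      · exact .inr ⟨v.val / 2, by omega, by omega⟩

/-- the sequence `p_1, p_3, …, p_{2r+1}` of maximal-order
Pfaffians of the tridiagonal skew-symmetric matrix (squarefree monomials)
is of interval type: for indices `i ≤ k ≤ j` in the sequence, any variable
dividing both `p_i` and `p_j` divides `p_k`. -/
theorem tridiagonal_pfaffians_interval_type
    (r : ℕ) (i k j : Fin (r + 1)) (hik : i ≤ k) (hkj : k ≤ j)
    (v : Fin (2 * r))
    (hi : (X v : MvPolynomial (Fin (2 * r)) K) ∣ pgen r K i)
    (hj : (X v : MvPolynomial (Fin (2 * r)) K) ∣ pgen r K j) :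
    (X v : MvPolynomial (Fin (2 * r)) K) ∣ pgen r K k := by
  rw [X_dvd_pgen_iff] at hi hj ⊢
  have hik' : i.val ≤ k.val := hik
  have hkj' : k.val ≤ j.val := hkj
  exact ⟨fun he => (hi.1 he).trans_le (by omega), fun ho => le_trans (by omega) (hj.2 ho)⟩
end

section
/- Let G be the bipartite graph on vertex set {(1 2), (3 4), (5 6), …, (n−2 n−1)} ∪ {(2 3), (4 5), …, (n−1 n)} (with n = 2r+1) where (i i+1) is adjacent to (j j+1) iff i is odd, j is even, and i < j. Then G is unmixed: every minimal vertex cover of G has the same cardinality. Moreover, a subset C of vertices is a minimal vertex cover of G iff C = {(2k 2k+1) : 1 ≤ k ≤ r} or C = {(1 2)} ∪ {(j j+1) : j odd, 3 ≤ j < i} ∪ {(k k+1) : k even, i < k ≤ 2r} for some odd i with 3 ≤ i ≤ 2r+1. In particular all minimal vertex covers have cardinality r. -/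
/-- The bipartite graph `G` on the vertices `(i, i+1)`, `1 ≤ i ≤ n−1`
(`n = 2r+1`), encoded as `v : Fin (2r)` standing for the pair
`(v+1, v+2)`: the vertex with odd label `i` is adjacent to the vertex with
even label `j` exactly when `i < j`. -/
def pfGraph (r : ℕ) : SimpleGraph (Fin (2 * r)) where
  Adj u v :=
    (Odd (u.val + 1) ∧ Even (v.val + 1) ∧ u < v) ∨
      (Odd (v.val + 1) ∧ Even (u.val + 1) ∧ v < u)
  symm := by constructor; intro u v h; tauto
  loopless := by
    constructor
    intro u h
    rcases h with ⟨_, _, h⟩ | ⟨_, _, h⟩ <;> exact lt_irrefl _ h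

/-- `C` is a vertex cover of `G`. -/
def IsVertexCover {α : Type*} (G : SimpleGraph α) (C : Finset α) : Prop :=
  ∀ u v : α, G.Adj u v → u ∈ C ∨ v ∈ C

/-- `C` is a minimal vertex cover of `G`. -/
def IsMinimalVertexCover {α : Type*} (G : SimpleGraph α) (C : Finset α) :
    Prop :=
  IsVertexCover G C ∧ ∀ D ⊆ C, IsVertexCover G D → D = C

/-- The cover `{(2k, 2k+1) : 1 ≤ k ≤ r}` (all vertices with even label). -/
def coverEven (r : ℕ) : Finset (Fin (2 * r)) :=
  Finset.univ.filter fun v => Odd v.val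

/-- The cover `{(1,2)} ∪ {(j, j+1) : j odd, 3 ≤ j < i} ∪
{(k, k+1) : k even, i < k ≤ 2r}`, for odd `i` with `3 ≤ i ≤ 2r+1`. -/
def coverOdd (r : ℕ) (i : ℕ) : Finset (Fin (2 * r)) :=
  Finset.univ.filter fun v =>
    v.val = 0 ∨ (Even v.val ∧ 2 ≤ v.val ∧ v.val + 1 < i) ∨
      (Odd v.val ∧ i < v.val + 1)

-- auxiliary lemmas

lemma pfGraph_adj {r : ℕ} {u v : Fin (2 * r)} :
    (pfGraph r).Adj u v ↔
      ((Odd (u.val + 1) ∧ Even (v.val + 1) ∧ u < v) ∨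
        (Odd (v.val + 1) ∧ Even (u.val + 1) ∧ v < u)) := Iff.rfl

lemma pfGraph_adj' {r : ℕ} {u v : Fin (2 * r)} :
    (pfGraph r).Adj u v ↔
      ((u.val % 2 = 0 ∧ v.val % 2 = 1 ∧ u.val < v.val) ∨
        (v.val % 2 = 0 ∧ u.val % 2 = 1 ∧ v.val < u.val)) := by
  rw [pfGraph_adj, Fin.lt_def, Fin.lt_def]
  simp only [Nat.odd_iff, Nat.even_iff]
  omega

lemma mem_coverEven {r : ℕ} {v : Fin (2 * r)} :
    v ∈ coverEven r ↔ v.val % 2 = 1 := by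
  simp [coverEven, Nat.odd_iff]

lemma mem_coverOdd {r : ℕ} {i : ℕ} {v : Fin (2 * r)} :
    v ∈ coverOdd r i ↔
      (v.val = 0 ∨ (v.val % 2 = 0 ∧ 2 ≤ v.val ∧ v.val + 1 < i) ∨
        (v.val % 2 = 1 ∧ i < v.val + 1)) := by
  simp [coverOdd, Nat.odd_iff, Nat.even_iff]

lemma coverEven_cover (r : ℕ) : IsVertexCover (pfGraph r) (coverEven r) := by
  intro u v h
  rw [pfGraph_adj'] at h
  rcases h with ⟨_, h2, _⟩ | ⟨_, h2, _⟩
  · right; rw [mem_coverEven]; omega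
  · left; rw [mem_coverEven]; omega

lemma coverEven_minimal (r : ℕ) :
    IsMinimalVertexCover (pfGraph r) (coverEven r) := by
  refine ⟨coverEven_cover r, fun D hD hcov => ?_⟩
  refine Finset.Subset.antisymm hD (fun v hv => ?_)
  rw [mem_coverEven] at hv
  have h2r : 0 < 2 * r := lt_of_le_of_lt (Nat.zero_le _) v.isLt
  have hadj : (pfGraph r).Adj ⟨0, h2r⟩ v := by
    rw [pfGraph_adj']
    exact Or.inl ⟨rfl, hv, by show (0:ℕ) < v.val; omega⟩
  rcases hcov _ _ hadj with h | h
  · have := hD h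
    rw [mem_coverEven] at this
    have h0v : ((⟨0, h2r⟩ : Fin (2 * r))).val = 0 := rfl
    omega
  · exact h

lemma coverOdd_cover (r : ℕ) (i : ℕ) (hi : i % 2 = 1) :
    IsVertexCover (pfGraph r) (coverOdd r i) := by
  intro u v h
  rw [pfGraph_adj'] at h
  rcases h with ⟨h1, h2, h3⟩ | ⟨h1, h2, h3⟩
  · by_cases hu : u.val + 1 < i
    · left; rw [mem_coverOdd]
      rcases Nat.eq_zero_or_pos u.val with h0 | h0
      · exact Or.inl h0
      · exact Or.inr (Or.inl ⟨h1, by omega, hu⟩)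
    · right; rw [mem_coverOdd]; right; right; constructor; omega; omega
  · by_cases hu : v.val + 1 < i
    · right; rw [mem_coverOdd]
      rcases Nat.eq_zero_or_pos v.val with h0 | h0
      · exact Or.inl h0
      · exact Or.inr (Or.inl ⟨h1, by omega, hu⟩)
    · left; rw [mem_coverOdd]; right; right; constructor; omega; omega

lemma coverOdd_minimal (r : ℕ) (i : ℕ) (hi : i % 2 = 1) (h3 : 3 ≤ i)
    (hle : i ≤ 2 * r + 1) :
    IsMinimalVertexCover (pfGraph r) (coverOdd r i) := by
  refine ⟨coverOdd_cover r i hi, fun D hD hcov => ?_⟩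
  refine Finset.Subset.antisymm hD (fun v hv => ?_)
  rw [mem_coverOdd] at hv
  have hv2r := v.isLt
  rcases hv with h0 | ⟨he, h2, hlt⟩ | ⟨ho, hgt⟩
  · -- v = (1,2); partner index 1
    have h1 : (1 : ℕ) < 2 * r := by omega
    have hadj : (pfGraph r).Adj v ⟨1, h1⟩ := by
      rw [pfGraph_adj']
      refine Or.inl ⟨by omega, ?_, ?_⟩
      · show 1 % 2 = 1; rfl
      · show v.val < 1; omega
    rcases hcov _ _ hadj with h | h
    · exact h
    · have := hD h
      rw [mem_coverOdd] at this
      have h1v : ((⟨1, h1⟩ : Fin (2*r))).val = 1 := rfl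
      omega
  · -- v even, 2 ≤ v, v+1 < i; partner index i-2 (odd, ≤ w)
    have hb : i - 2 < 2 * r := by omega
    have hadj : (pfGraph r).Adj v ⟨i - 2, hb⟩ := by
      rw [pfGraph_adj']
      refine Or.inl ⟨he, by show (i-2) % 2 = 1; omega, by show v.val < i - 2; omega⟩
    rcases hcov _ _ hadj with h | h
    · exact h
    · have := hD h
      rw [mem_coverOdd] at this
      have h1v : ((⟨i - 2, hb⟩ : Fin (2*r))).val = i - 2 := rfl
      omega
  · -- v odd, i < v+1; partner index i-1 (even, not in cover)
    have hb : i - 1 < 2 * r := by omega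
    have hadj : (pfGraph r).Adj (⟨i - 1, hb⟩ : Fin (2 * r)) v := by
      rw [pfGraph_adj']
      refine Or.inl ⟨by show (i-1) % 2 = 0; omega, ho, by show i - 1 < v.val; omega⟩
    rcases hcov _ _ hadj with h | h
    · have := hD h
      rw [mem_coverOdd] at this
      have h1v : ((⟨i - 1, hb⟩ : Fin (2*r))).val = i - 1 := rfl
      omega
    · exact h

lemma coverEven_card (r : ℕ) : (coverEven r).card = r := by
  classical
  have h : coverEven r =
      Finset.univ.image (fun k : Fin r => (⟨2 * k.val + 1, by omega⟩ : Fin (2 * r))) := by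
    ext v
    rw [mem_coverEven]
    simp only [Finset.mem_image, Finset.mem_univ, true_and]
    constructor
    · intro hv
      refine ⟨⟨v.val / 2, by omega⟩, ?_⟩
      apply Fin.ext
      simp; omega
    · rintro ⟨k, rfl⟩
      simp
  rw [h, Finset.card_image_of_injective _ ?_, Finset.card_univ, Fintype.card_fin]
  intro a b hab
  have := Fin.val_eq_of_eq hab
  simp at this
  exact Fin.ext (by omega)

lemma coverOdd_card (r : ℕ) (i : ℕ) (hi : i % 2 = 1) (h3 : 3 ≤ i)
    (hle : i ≤ 2 * r + 1) : (coverOdd r i).card = r := by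
  classical
  have h : coverOdd r i =
      Finset.univ.image (fun k : Fin r =>
        (⟨if 2 * k.val + 1 < i then 2 * k.val else 2 * k.val + 1,
          by split <;> omega⟩ : Fin (2 * r))) := by
    ext v
    rw [mem_coverOdd]
    simp only [Finset.mem_image, Finset.mem_univ, true_and]
    constructor
    · intro hv
      refine ⟨⟨v.val / 2, by omega⟩, ?_⟩
      apply Fin.ext
      simp only []
      rcases hv with h0 | ⟨he, h2, hlt⟩ | ⟨ho, hgt⟩
      · rw [if_pos (by omega)]; omega
      · rw [if_pos (by omega)]; omega
      · rw [if_neg (by omega)]; omega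
    · rintro ⟨k, rfl⟩
      simp only []
      split
      · rcases Nat.eq_zero_or_pos k.val with h0 | h0
        · left; omega
        · right; left; omega
      · right; right; omega
  rw [h, Finset.card_image_of_injective _ ?_, Finset.card_univ, Fintype.card_fin]
  intro a b hab
  have := Fin.val_eq_of_eq hab
  simp only [] at this
  apply Fin.ext
  split at this <;> split at this <;> omega

lemma not_cover_erase {r : ℕ} {C : Finset (Fin (2 * r))} {x : Fin (2 * r)}
    (hC : IsMinimalVertexCover (pfGraph r) C) (hx : x ∈ C) :
    ∃ a b : Fin (2 * r), (pfGraph r).Adj a b ∧ a ∉ C.erase x ∧ b ∉ C.erase x := by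
  have hnc : ¬ IsVertexCover (pfGraph r) (C.erase x) := by
    intro hcov
    have heq := hC.2 (C.erase x) (Finset.erase_subset _ _) hcov
    exact (Finset.notMem_erase x C) (by rw [heq]; exact hx)
  rw [IsVertexCover] at hnc
  push_neg at hnc
  obtain ⟨a, b, hab, h⟩ := hnc
  exact ⟨a, b, hab, h.1, h.2⟩

lemma classify (r : ℕ) (C : Finset (Fin (2 * r))) :
    IsMinimalVertexCover (pfGraph r) C ↔
      (C = coverEven r ∨
        ∃ i : ℕ, Odd i ∧ 3 ≤ i ∧ i ≤ 2 * r + 1 ∧ C = coverOdd r i) := by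
  constructor
  · intro hC
    rcases Nat.eq_zero_or_pos r with hr | hr
    · left
      subst hr
      apply Finset.eq_of_subset_of_card_le (fun v _ => by exact absurd v.isLt (by omega))
      exact le_trans (Finset.card_le_univ _) (by simp)
    · -- r ≥ 1
      have h2r : 0 < 2 * r := by omega
      set z : Fin (2 * r) := ⟨0, h2r⟩ with hz
      by_cases hzC : z ∈ C
      · -- case 0 ∈ C : coverOdd
        right
        -- there is an odd vertex not in C
        have hex : ∃ x : Fin (2 * r), x.val % 2 = 1 ∧ x ∉ C := by
          by_contra hall
          push_neg at hall
          have hsub : coverEven r ⊆ C := fun v hv => by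
            rcases Classical.em (v ∈ C) with h | h
            · exact h
            · rw [mem_coverEven] at hv; exact absurd (hall v hv) (by tauto)
          have heq := hC.2 (coverEven r) hsub (coverEven_cover r)
          rw [← heq] at hzC
          rw [mem_coverEven] at hzC
          simp [hz] at hzC
        classical
        set T : Finset (Fin (2 * r)) :=
          Finset.univ.filter (fun x => x.val % 2 = 1 ∧ x ∉ C) with hT
        have hTne : T.Nonempty := by
          obtain ⟨x, hx1, hx2⟩ := hex
          exact ⟨x, by simp [hT, hx1, hx2]⟩
        set w : Fin (2 * r) := T.max' hTne with hw
        have hwT : w ∈ T := T.max'_mem hTne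
        have hwo : w.val % 2 = 1 := by
          have := hwT; simp [hT] at this; exact this.1
        have hwC : w ∉ C := by
          have := hwT; simp [hT] at this; exact this.2
        have hmax : ∀ x : Fin (2 * r), x.val % 2 = 1 → x ∉ C → x.val ≤ w.val := by
          intro x h1 h2
          exact T.le_max' x (by simp [hT, h1, h2])
        -- claim A: odd x ∈ C → w < x
        have hA : ∀ x : Fin (2 * r), x.val % 2 = 1 → x ∈ C → w.val < x.val := by
          intro x hxo hxC
          by_contra hcon
          push_neg at hcon
          have hxw : x.val < w.val := by
            rcases Nat.lt_or_ge x.val w.val with h | h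
            · exact h
            · exfalso; apply hwC
              have : x = w := Fin.ext (by omega)
              exact this ▸ hxC
          obtain ⟨a, b, hab, ha, hb⟩ := not_cover_erase hC hxC
          rw [pfGraph_adj'] at hab
          -- one of a,b is in C (cover) hence equals x
          rcases hC.1 a b (by rw [pfGraph_adj']; exact hab) with haC | hbC
          · have hax : a = x := by
              by_contra hne
              exact ha (Finset.mem_erase.mpr ⟨hne, haC⟩)
            subst hax
            -- a = x is odd; adjacency forces a in even-val role fails, so case 2
            rcases hab with ⟨h1, h2, h3⟩ | ⟨h1, h2, h3⟩
            · omega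
            · -- b < a = x, b even, b ∉ C
              have hbC' : b ∉ C := fun hbc =>
                hb (Finset.mem_erase.mpr ⟨fun he => by rw [he] at h1; omega, hbc⟩)
              -- edge b–w uncovered
              have hadj : (pfGraph r).Adj b w := by
                rw [pfGraph_adj']; left; exact ⟨h1, hwo, by omega⟩
              rcases hC.1 b w hadj with h | h
              · exact hbC' h
              · exact hwC h
          · have hbx : b = x := by
              by_contra hne
              exact hb (Finset.mem_erase.mpr ⟨hne, hbC⟩)
            subst hbx
            rcases hab with ⟨h1, h2, h3⟩ | ⟨h1, h2, h3⟩
            · have haC' : a ∉ C := fun hac =>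
                ha (Finset.mem_erase.mpr ⟨fun he => by rw [he] at h1; omega, hac⟩)
              have hadj : (pfGraph r).Adj a w := by
                rw [pfGraph_adj']; left; exact ⟨h1, hwo, by omega⟩
              rcases hC.1 a w hadj with h | h
              · exact haC' h
              · exact hwC h
            · omega
        -- claim B: even u ∈ C → u < w
        have hB : ∀ u : Fin (2 * r), u.val % 2 = 0 → u ∈ C → u.val < w.val := by
          intro u huo huC
          obtain ⟨a, b, hab, ha, hb⟩ := not_cover_erase hC huC
          rw [pfGraph_adj'] at hab
          rcases hC.1 a b (by rw [pfGraph_adj']; exact hab) with haC | hbC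
          · have hau : a = u := by
              by_contra hne
              exact ha (Finset.mem_erase.mpr ⟨hne, haC⟩)
            subst hau
            rcases hab with ⟨h1, h2, h3⟩ | ⟨h1, h2, h3⟩
            · -- b odd, a < b, b ∉ C, so b ≤ w
              have hbC' : b ∉ C := fun hbc =>
                hb (Finset.mem_erase.mpr ⟨fun he => by rw [he] at h2; omega, hbc⟩)
              have := hmax b h2 hbC'
              omega
            · omega
          · have hbu : b = u := by
              by_contra hne
              exact hb (Finset.mem_erase.mpr ⟨hne, hbC⟩)
            subst hbu
            rcases hab with ⟨h1, h2, h3⟩ | ⟨h1, h2, h3⟩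
            · omega
            · have haC' : a ∉ C := fun hac =>
                ha (Finset.mem_erase.mpr ⟨fun he => by rw [he] at h2; omega, hac⟩)
              have := hmax a h2 haC'
              omega
        -- claim C: even u < w → u ∈ C
        have hCgeq : ∀ u : Fin (2 * r), u.val % 2 = 0 → u.val < w.val → u ∈ C := by
          intro u huo hult
          have hadj : (pfGraph r).Adj u w := by
            rw [pfGraph_adj']; left; exact ⟨huo, hwo, hult⟩
          rcases hC.1 u w hadj with h | h
          · exact h
          · exact absurd h hwC
        -- claim D: odd x > w → x ∈ C
        have hD : ∀ x : Fin (2 * r), x.val % 2 = 1 → w.val < x.val → x ∈ C := by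
          intro x hxo hgt
          by_contra hxc
          have := hmax x hxo hxc
          omega
        refine ⟨w.val + 2, ?_, by omega, by have := w.isLt; omega, ?_⟩
        · rw [Nat.odd_iff]; omega
        · ext v
          rw [mem_coverOdd]
          have hv2r := v.isLt
          constructor
          · intro hvC
            rcases Nat.even_or_odd v.val with he | ho
            · rw [Nat.even_iff] at he
              have := hB v he hvC
              rcases Nat.eq_zero_or_pos v.val with h0 | h0
              · exact Or.inl h0
              · exact Or.inr (Or.inl ⟨he, by omega, by omega⟩)
            · rw [Nat.odd_iff] at ho
              have := hA v ho hvC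
              exact Or.inr (Or.inr ⟨ho, by omega⟩)
          · intro hv
            rcases hv with h0 | ⟨he, h2, hlt⟩ | ⟨ho, hgt⟩
            · have : v = z := Fin.ext h0
              exact this ▸ hzC
            · exact hCgeq v he (by omega)
            · exact hD v ho (by omega)
      · -- case 0 ∉ C : coverEven
        left
        have hsub : coverEven r ⊆ C := by
          intro v hv
          rw [mem_coverEven] at hv
          have hadj : (pfGraph r).Adj z v := by
            rw [pfGraph_adj']
            refine Or.inl ⟨?_, hv, ?_⟩
            · show 0 % 2 = 0; rfl
            · show (0:ℕ) < v.val; omega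
          rcases hC.1 z v hadj with h | h
          · exact absurd h hzC
          · exact h
        exact (hC.2 (coverEven r) hsub (coverEven_cover r)).symm
  · rintro (rfl | ⟨i, hi, h3, hle, rfl⟩)
    · exact coverEven_minimal r
    · exact coverOdd_minimal r i (Nat.odd_iff.mp hi) h3 hle


/-- the minimal vertex covers of the bipartite graph `G` are
exactly `{(2k, 2k+1) : 1 ≤ k ≤ r}` together with, for each odd `i` with
`3 ≤ i ≤ 2r+1`, the cover `{(1,2)} ∪ {(j,j+1) : j odd, 3 ≤ j < i} ∪
{(k,k+1) : k even, i < k ≤ 2r}`.  In particular `G` is unmixed: every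
minimal vertex cover has cardinality `r`. -/
theorem pfGraph_minimal_vertex_covers (r : ℕ) :
    (∀ C : Finset (Fin (2 * r)),
      IsMinimalVertexCover (pfGraph r) C ↔
        (C = coverEven r ∨
          ∃ i : ℕ, Odd i ∧ 3 ≤ i ∧ i ≤ 2 * r + 1 ∧ C = coverOdd r i)) ∧
    (∀ C : Finset (Fin (2 * r)),
      IsMinimalVertexCover (pfGraph r) C → C.card = r) := by
  refine ⟨classify r, fun C hC => ?_⟩
  rcases (classify r C).mp hC with rfl | ⟨i, hi, h3, hle, rfl⟩
  · exact coverEven_card r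
  · exact coverOdd_card r i (Nat.odd_iff.mp hi) h3 hle
end

section
/- Let r ∈ ℕ, n = 2r+1, and let X_4 be the n×n skew-symmetric matrix in block form [[O, A],[−Aᵀ, B]] where A is the (r+1)×r generic matrix with entries x_{k, n−i+1} and B is a generic r×r skew-symmetric matrix. Let S = K[X_4, y_1, …, y_{r+1}] and define g_i = ∑_{k=1}^{r+1} (−1)^{k+1} x_{k, n−(i−1)} y_k for i = 1, …, r. Then g_1, …, g_r form a regular sequence in S; in particular the ideal J = ⟨g_1, …, g_r⟩ is a complete intersection generated by quadrics. -/
/-!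
Via `MvPolynomial.sumAlgEquiv`, `S` is a polynomial ring over `K[B, y]` in the entries `x_{k,j}`
of the block `A` of `X₄`, and `g_i` becomes the form `∑_k c_k x_{k,j}` of the column
`j = Fin.rev i`, whose coefficients `c_k = (-1)^k y_k` form a regular sequence of `K[B, y]`.

By induction on a set `T` of columns, `c_t` is regular modulo `(forms of T) + (c_0, …, c_{t-1})`
whenever `|T| + t < r + 1`. To add a column `j`, split off its variables: the ideal becomes
extended from the remaining variables and the form of `j` becomes linear in the new ones, with a
coefficient `c_{t+1}` that is regular modulo the ideal plus `c_t`. A degree comparison in one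
variable makes the form regular modulo `(forms of T) + (c_0, …, c_t)`, and exchanging `c_t` with
the form in this regular pair gives the claim for `insert j T`. The same linear-form argument, with
the coefficient `c_0`, shows that each `g_i` is regular modulo its predecessors.
-/

open MvPolynomial

/-- The variables of the sparse skew-symmetric matrix
`X₄ = [[O, A], [−Aᵀ, B]]` of order `n = 2r+1`: the generic entries of the
`(r+1) × r` block `A` (`x_{k,j}` with `1 ≤ k ≤ r+1 < j ≤ n`), the generic
entries of the skew-symmetric `r × r` block `B`, and the Rees variables
`y_1, …, y_{r+1}`. -/
abbrev X4Var (r : ℕ) : Type :=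
  (Fin (r + 1) × Fin r) ⊕ ({p : Fin r × Fin r // p.1 < p.2} ⊕ Fin (r + 1))

/-- The defining relations of the Rees algebra of `Pf_{n−1}(X₄)`:
`g_i = ∑_{k=1}^{r+1} (−1)^{k+1} x_{k, n−(i−1)} y_k`, `i = 1, …, r`.  Here the
column of `A` holding `x_{k, n−(i−1)}` is the `(r−i)`-th (zero-based
`r−1−i'` for `i = i'+1`). -/
noncomputable def g4 (r : ℕ) (K : Type*) [Field K] (i : Fin r) :
    MvPolynomial (X4Var r) K :=
  ∑ k : Fin (r + 1),
    (-1 : MvPolynomial (X4Var r) K) ^ k.val *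
      (X (Sum.inl (k, ⟨r - 1 - i.val, by have := i.isLt; omega⟩)) *
        X (Sum.inr (Sum.inr k)))

open scoped nonZeroDivisors

open RingTheory.Sequence

section RegularElements

variable {R : Type*} [CommRing R]

theorem isSMulRegular_quotient_iff_mul_mem {I : Ideal R} {a : R} :
    IsSMulRegular (R ⧸ I) a ↔ ∀ b, a * b ∈ I → b ∈ I :=
  isSMulRegular_quotient_iff_mem_of_smul_mem I a

theorem IsSMulRegular.quotient_span_singleton_sup_swap {I : Ideal R} {a f : R}
    (ha : IsSMulRegular (R ⧸ I) a) (hf : IsSMulRegular (R ⧸ (Ideal.span {a} ⊔ I)) f) :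
    IsSMulRegular (R ⧸ (Ideal.span {f} ⊔ I)) a := by
  rw [isSMulRegular_quotient_iff_mul_mem] at *
  intro p hp
  obtain ⟨h, q, hq, hhq⟩ := Ideal.mem_span_singleton_sup.1 hp
  obtain ⟨w, q', hq', hwq'⟩ := Ideal.mem_span_singleton_sup.1 <| hf h <|
    Ideal.mem_span_singleton_sup.2 ⟨p, -q, neg_mem hq, by linear_combination -hhq⟩
  refine Ideal.mem_span_singleton_sup.2 ⟨w, p - w * f, ha _ ?_, by ring⟩
  rw [show a * (p - w * f) = q + q' * f by linear_combination -hhq - f * hwq']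
  exact add_mem hq (Ideal.mul_mem_right _ _ hq')

theorem isSMulRegular_quotient_map_equiv_iff {S E : Type*} [CommRing S] [EquivLike E R S]
    [RingEquivClass E R S] (e : E) {I : Ideal R} {a : R} :
    IsSMulRegular (S ⧸ I.map e) (e a) ↔ IsSMulRegular (R ⧸ I) a := by
  simp only [isSMulRegular_quotient_iff_mul_mem, (EquivLike.surjective e).forall, ← map_mul,
    Ideal.mem_map_of_equiv, (EquivLike.injective e).eq_iff, exists_eq_right]

theorem List.setOf_mem_take_ofFn {α : Type*} {n : ℕ} (f : Fin n → α) (i : Fin n) :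
    {x | x ∈ (List.ofFn f).take i} = f '' Set.Iio i := by
  ext x
  simp only [Set.mem_ofPred_eq, List.mem_take_iff_getElem, List.getElem_ofFn, List.length_ofFn,
    Set.mem_image, Set.mem_Iio]
  constructor
  · rintro ⟨k, hk, rfl⟩
    exact ⟨⟨k, by omega⟩, Fin.lt_def.2 (by simp; omega), rfl⟩
  · rintro ⟨k, hk, rfl⟩
    exact ⟨k, by rw [Fin.lt_def] at hk; omega, rfl⟩

theorem isWeaklyRegular_ofFn_iff {n : ℕ} (f : Fin n → R) :
    IsWeaklyRegular R (List.ofFn f) ↔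
      ∀ i, IsSMulRegular (R ⧸ Ideal.span (f '' Set.Iio i)) (f i) := by
  rw [isWeaklyRegular_iff_Fin, (finCongr (List.length_ofFn)).forall_congr_left]
  refine forall_congr' fun i => ?_
  have hI : (Ideal.ofList ((List.ofFn f).take i) • ⊤ : Submodule R R) =
      Ideal.span (f '' Set.Iio i) := by
    rw [smul_eq_mul, Ideal.mul_top, Ideal.ofList, List.setOf_mem_take_ofFn]
  -- the two sides differ only by the cast of the index and the `HasQuotient` instance
  convert Iff.rfl using 3 <;> first | rfl | exact hI.symm | simp

theorem RingEquiv.isRegular_map_iff {S : Type*} [CommRing S] (e : R ≃+* S) (rs : List R) :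
    IsRegular S (rs.map e) ↔ IsRegular R rs :=
  (e.toAddEquiv.isRegular_congr
    (List.forall₂_map_right_iff.2 (List.forall₂_same.2 fun a _ x => map_mul e a x))).symm

end RegularElements

namespace MvPolynomial

variable {R σ : Type*} [CommRing R]

theorem isSMulRegular_quotient_map_C_iff {J : Ideal R} {a : R} :
    IsSMulRegular (MvPolynomial σ R ⧸ J.map C) (C a : MvPolynomial σ R) ↔
      IsSMulRegular (R ⧸ J) a := by
  simp only [isSMulRegular_quotient_iff_mul_mem]
  refine ⟨fun h b hb => ?_, fun h p hp => ?_⟩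
  · simpa using mem_map_C_iff.1 (h (C b) (by rw [← map_mul]; exact Ideal.mem_map_of_mem C hb)) 0
  · rw [mem_map_C_iff] at hp ⊢
    exact fun m => h _ (by simpa only [coeff_C_mul] using hp m)

theorem sum_C_mul_X_mem_nonZeroDivisors {κ : Type*} [Fintype κ] {v : κ → σ}
    (hv : v.Injective) {c : κ → R} (k₀ : κ) (hc : c k₀ ∈ R⁰) :
    ∑ k, C (c k) * X (v k) ∈ (MvPolynomial σ R)⁰ := by
  classical
  rw [mem_nonZeroDivisors_iff_right]
  intro p hp
  by_contra hp0
  obtain ⟨m, hm, hmax⟩ :=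
    p.support.exists_max_image (fun m => m (v k₀)) (support_nonempty.2 hp0)
  -- Comparing coefficients at `m + e_{v k₀}`, every summand but the `k₀`-th involves a monomial
  -- of `p` with a larger exponent of `X (v k₀)` than the maximal one.
  have hcoeff : coeff (m + Finsupp.single (v k₀) 1) (p * ∑ k, C (c k) * X (v k)) =
      coeff m p * c k₀ := by
    rw [Finset.mul_sum, coeff_sum, Finset.sum_eq_single k₀]
    · rw [mul_left_comm, coeff_C_mul, mul_comm, coeff_mul_X]
    · intro k _ hk
      rw [mul_left_comm, coeff_C_mul, mul_comm, coeff_mul_X']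
      split_ifs
      · rw [notMem_support_iff.1 fun h => ?_, zero_mul]
        have := hmax _ h
        have hne : v k ≠ v k₀ := hv.ne hk
        simp [hne] at this
      · exact zero_mul _
    · simp
  rw [hp, coeff_zero] at hcoeff
  exact mem_support_iff.1 hm ((mul_right_mem_nonZeroDivisors_eq_zero_iff hc).1 hcoeff.symm)

theorem isSMulRegular_quotient_map_C_sum_C_mul_X {κ : Type*} [Fintype κ] {v : κ → σ}
    (hv : v.Injective) {c : κ → R} {J : Ideal R} (k₀ : κ)
    (hc : IsSMulRegular (R ⧸ J) (c k₀)) :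
    IsSMulRegular (MvPolynomial σ R ⧸ J.map C) (∑ k, C (c k) * X (v k)) := by
  have hker : J.map (C : R →+* MvPolynomial σ R) = RingHom.ker (map (Ideal.Quotient.mk J)) := by
    rw [ker_map, Ideal.mk_ker]
  have hreg :
      (∑ k, C (c k) * X (v k)).map (Ideal.Quotient.mk J) ∈ (MvPolynomial σ (R ⧸ J))⁰ := by
    simp only [map_sum, map_mul, map_C, map_X]
    refine sum_C_mul_X_mem_nonZeroDivisors hv k₀ (mem_nonZeroDivisors_iff_right.2 fun x hx => ?_)
    obtain ⟨x, rfl⟩ := Ideal.Quotient.mk_surjective x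
    rw [← map_mul, Ideal.Quotient.eq_zero_iff_mem, mul_comm] at hx
    exact Ideal.Quotient.eq_zero_iff_mem.2 (isSMulRegular_quotient_iff_mul_mem.1 hc x hx)
  rw [isSMulRegular_quotient_iff_mul_mem, hker]
  intro p hp
  rw [RingHom.mem_ker, map_mul] at hp
  rw [RingHom.mem_ker]
  exact (mul_right_mem_nonZeroDivisors_eq_zero_iff hreg).1 (by rwa [mul_comm])

theorem isSMulRegular_X_quotient_span_X {v : σ} {S : Set σ} (hv : v ∉ S) :
    IsSMulRegular (MvPolynomial σ R ⧸ Ideal.span (X '' S : Set (MvPolynomial σ R)))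
      (X v : MvPolynomial σ R) := by
  classical
  rw [isSMulRegular_quotient_iff_mul_mem]
  simp only [mem_ideal_span_X_image]
  intro p hp m hm
  obtain ⟨i, hiS, hi⟩ := hp (Finsupp.single v 1 + m)
    (by rwa [mem_support_iff, coeff_X_mul, ← mem_support_iff])
  refine ⟨i, hiS, ?_⟩
  have hne : v ≠ i := fun h => hv (h ▸ hiS)
  simpa [Finsupp.single_apply, hne] using hi

theorem map_C_comap_C_span_of_subset_range {s : Set (MvPolynomial σ R)}
    (hs : s ⊆ Set.range C) : ((Ideal.span s).comap C).map C = Ideal.span s :=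
  le_antisymm Ideal.map_comap_le <| Ideal.span_le.2 fun x hx => by
    obtain ⟨d, rfl⟩ := hs hx
    exact Ideal.mem_map_of_mem C (Ideal.mem_comap.2 (Ideal.subset_span hx))

end MvPolynomial

section ColumnForms

variable {A : Type*} [CommRing A] {n : ℕ} (c : Fin n → A) {ι : Type*}

noncomputable def columnForm (j : ι) : MvPolynomial (Fin n × ι) A :=
  ∑ k, C (c k) * X (k, j)

noncomputable def columnFormIdeal (T : Set ι) (J : Ideal A) :
    Ideal (MvPolynomial (Fin n × ι) A) :=
  Ideal.span (columnForm c '' T) ⊔ J.map C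

theorem columnFormIdeal_insert (j : ι) (T : Set ι) (J : Ideal A) :
    columnFormIdeal c (insert j T) J = Ideal.span {columnForm c j} ⊔ columnFormIdeal c T J := by
  rw [columnFormIdeal, columnFormIdeal, Set.image_insert_eq, Ideal.span_insert, sup_assoc]

theorem columnFormIdeal_span_singleton_sup (T : Set ι) (a : A) (J : Ideal A) :
    columnFormIdeal c T (Ideal.span {a} ⊔ J) = Ideal.span {C a} ⊔ columnFormIdeal c T J := by
  rw [columnFormIdeal, columnFormIdeal, Ideal.map_sup, Ideal.map_span, Set.image_singleton,
    sup_left_comm]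

variable [DecidableEq ι]

noncomputable def splitColumn (j : ι) :
    MvPolynomial (Fin n × ι) A ≃ₐ[A]
      MvPolynomial {p : Fin n × ι // p.2 = j} (MvPolynomial {p : Fin n × ι // p.2 ≠ j} A) :=
  (renameEquiv A (Equiv.sumCompl fun p : Fin n × ι => p.2 = j).symm).trans (sumAlgEquiv A _ _)

theorem splitColumn_C (j : ι) (a : A) :
    splitColumn j (C a : MvPolynomial (Fin n × ι) A) = C (C a) :=
  (splitColumn j).commutes a

theorem splitColumn_X_self (j : ι) (k : Fin n) :
    splitColumn j (X (k, j) : MvPolynomial (Fin n × ι) A) = X ⟨(k, j), rfl⟩ := by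
  simp [splitColumn, Equiv.sumCompl_symm_apply_of_pos, sumAlgEquiv_X_inl]

theorem splitColumn_X_of_ne {j j' : ι} (h : j' ≠ j) (k : Fin n) :
    splitColumn j (X (k, j') : MvPolynomial (Fin n × ι) A) = C (X ⟨(k, j'), h⟩) := by
  rw [splitColumn, AlgEquiv.trans_apply, renameEquiv_apply, rename_X,
    Equiv.sumCompl_symm_apply_of_neg (a := (k, j')) h, sumAlgEquiv_X_inr]

theorem splitColumn_columnForm_self (j : ι) :
    splitColumn j (columnForm c j) = ∑ k, C (C (c k)) * X ⟨(k, j), rfl⟩ := by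
  simp only [columnForm, map_sum, map_mul, splitColumn_C, splitColumn_X_self]

theorem splitColumn_columnForm_mem_range {j j' : ι} (h : j' ≠ j) :
    splitColumn j (columnForm c j') ∈ Set.range C := by
  refine ⟨∑ k, C (c k) * X ⟨(k, j'), h⟩, ?_⟩
  simp only [columnForm, map_sum, map_mul, splitColumn_C, splitColumn_X_of_ne h]

theorem isSMulRegular_columnForm_of_isSMulRegular_C {T : Set ι} {j : ι} (hj : j ∉ T)
    {J : Ideal A} (k₀ : Fin n)
    (h : IsSMulRegular (_ ⧸ columnFormIdeal c T J) (C (c k₀) : MvPolynomial (Fin n × ι) A)) :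
    IsSMulRegular (_ ⧸ columnFormIdeal c T J) (columnForm c j) := by
  obtain ⟨JD, hJD⟩ : ∃ JD : Ideal (MvPolynomial {p : Fin n × ι // p.2 ≠ j} A),
      (columnFormIdeal c T J).map (splitColumn j) = JD.map C := by
    refine ⟨(Ideal.span (splitColumn j '' (columnForm c '' T))).comap C ⊔ J.map C, ?_⟩
    have hJ : (J.map (C : A →+* MvPolynomial (Fin n × ι) A)).map (splitColumn j) =
        (J.map (C : A →+* MvPolynomial {p : Fin n × ι // p.2 ≠ j} A)).map C := by
      rw [← Ideal.map_coe (splitColumn j), Ideal.map_map, Ideal.map_map]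
      congr 1
      ext a : 1
      exact splitColumn_C j a
    rw [columnFormIdeal, Ideal.map_sup, Ideal.map_sup, Ideal.map_span,
      map_C_comap_C_span_of_subset_range, hJ]
    rintro _ ⟨_, ⟨j', hj', rfl⟩, rfl⟩
    exact splitColumn_columnForm_mem_range c (ne_of_mem_of_not_mem hj' hj)
  rw [← isSMulRegular_quotient_map_equiv_iff (splitColumn j), hJD] at h ⊢
  rw [splitColumn_C, isSMulRegular_quotient_map_C_iff] at h
  rw [splitColumn_columnForm_self]
  have hv : Function.Injective
      fun k : Fin n => (⟨(k, j), rfl⟩ : {p : Fin n × ι // p.2 = j}) :=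
    fun k k' h => congrArg (fun p => p.1.1) h
  exact isSMulRegular_quotient_map_C_sum_C_mul_X hv k₀ h

theorem isSMulRegular_C_columnFormIdeal_insert {T : Set ι} {j : ι} (hj : j ∉ T) {J : Ideal A}
    {a : A} (ha : IsSMulRegular (_ ⧸ columnFormIdeal c T J) (C a : MvPolynomial (Fin n × ι) A))
    (k₀ : Fin n) (hk₀ : IsSMulRegular (_ ⧸ columnFormIdeal c T (Ideal.span {a} ⊔ J))
      (C (c k₀) : MvPolynomial (Fin n × ι) A)) :
    IsSMulRegular (_ ⧸ columnFormIdeal c (insert j T) J)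
      (C a : MvPolynomial (Fin n × ι) A) := by
  have hj := isSMulRegular_columnForm_of_isSMulRegular_C c hj k₀ hk₀
  rw [columnFormIdeal_span_singleton_sup] at hj
  rw [columnFormIdeal_insert]
  exact ha.quotient_span_singleton_sup_swap hj

theorem isSMulRegular_C_columnFormIdeal (hc : IsWeaklyRegular A (List.ofFn c)) (T : Finset ι)
    (t : Fin n) (ht : T.card + t < n) :
    IsSMulRegular (_ ⧸ columnFormIdeal c (T : Set ι) (Ideal.span (c '' Set.Iio t)))
      (C (c t) : MvPolynomial (Fin n × ι) A) := by
  induction T using Finset.induction_on generalizing t with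
  | empty =>
    rw [columnFormIdeal, Finset.coe_empty, Set.image_empty, Ideal.span_empty, bot_sup_eq,
      isSMulRegular_quotient_map_C_iff]
    exact (isWeaklyRegular_ofFn_iff c).1 hc t
  | insert j T hj ih =>
    rw [Finset.card_insert_of_notMem hj] at ht
    set t' : Fin n := ⟨t + 1, by omega⟩
    have hIio : Set.Iio t' = insert t (Set.Iio t) := by
      ext k
      simp only [Set.mem_Iio, Set.mem_insert_iff, Fin.lt_def, Fin.ext_iff, t']
      omega
    have ht' := ih t' (by simp only [t']; omega)
    rw [hIio, Set.image_insert_eq, Ideal.span_insert] at ht'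
    rw [Finset.coe_insert]
    exact isSMulRegular_C_columnFormIdeal_insert c (by exact_mod_cast hj) (ih t (by omega)) t' ht'

theorem isRegular_ofFn_columnForm [Nontrivial A] (hc : IsWeaklyRegular A (List.ofFn c))
    {m : ℕ} (hm : m ≤ n) {col : Fin m → ι} (hcol : col.Injective) :
    IsRegular (MvPolynomial (Fin n × ι) A) (List.ofFn (columnForm c ∘ col)) := by
  refine ⟨(isWeaklyRegular_ofFn_iff _).2 fun i => ?_, fun h => ?_⟩
  · set T := (Finset.Iio i).image col
    have hT : (columnForm c ∘ col) '' Set.Iio i = columnForm c '' T := by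
      rw [Finset.coe_image, Finset.coe_Iio, Set.image_comp]
    have hiT : col i ∉ T := by simp [T, hcol.eq_iff]
    have hcard : T.card = i := by rw [Finset.card_image_of_injective _ hcol, Fin.card_Iio]
    have h0 : 0 < n := by omega
    have hIio : c '' Set.Iio ⟨0, h0⟩ = ∅ := by
      simp [Set.eq_empty_iff_forall_notMem, Fin.lt_def]
    have := isSMulRegular_columnForm_of_isSMulRegular_C c hiT ⟨0, h0⟩
      (isSMulRegular_C_columnFormIdeal c hc T ⟨0, h0⟩ (by simp only [hcard]; omega))
    rwa [hIio, Ideal.span_empty, columnFormIdeal, Ideal.map_bot, sup_bot_eq, ← hT] at this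
  · have h1 : (1 : MvPolynomial (Fin n × ι) A) ∈
        (Ideal.ofList (List.ofFn (columnForm c ∘ col)) • ⊤ : Submodule _ _) :=
      h ▸ Submodule.mem_top
    rw [smul_eq_mul, Ideal.mul_top] at h1
    have hker : Ideal.ofList (List.ofFn (columnForm c ∘ col)) ≤ RingHom.ker constantCoeff := by
      refine Ideal.span_le.2 fun x hx => ?_
      obtain ⟨i, rfl⟩ := List.mem_ofFn.1 hx
      simp [columnForm]
    exact one_ne_zero (α := A) (by simpa using hker h1)

end ColumnForms

section Relations

variable (r : ℕ) (K : Type*) [Field K]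

noncomputable def g4Coeff (k : Fin (r + 1)) :
    MvPolynomial ({p : Fin r × Fin r // p.1 < p.2} ⊕ Fin (r + 1)) K :=
  (-1) ^ (k : ℕ) * X (Sum.inr k)

theorem sumAlgEquiv_g4 (i : Fin r) :
    sumAlgEquiv K _ _ (g4 r K i) = columnForm (g4Coeff r K) i.rev := by
  have hcol : (⟨r - 1 - i, by omega⟩ : Fin r) = i.rev := Fin.ext (by simp [Fin.val_rev]; omega)
  simp only [g4, columnForm, g4Coeff, hcol, map_sum, map_mul, map_pow, map_neg, map_one,
    sumAlgEquiv_X_inl, sumAlgEquiv_X_inr]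
  refine Finset.sum_congr rfl fun k _ => ?_
  ring

theorem isWeaklyRegular_ofFn_g4Coeff :
    IsWeaklyRegular (MvPolynomial ({p : Fin r × Fin r // p.1 < p.2} ⊕ Fin (r + 1)) K)
      (List.ofFn (g4Coeff r K)) := by
  rw [isWeaklyRegular_ofFn_iff]
  intro t
  have hspan : Ideal.span (g4Coeff r K '' Set.Iio t) =
      Ideal.span (X '' (Sum.inr '' Set.Iio t)) := by
    refine le_antisymm (Ideal.span_le.2 ?_) (Ideal.span_le.2 ?_)
    · rintro _ ⟨k, hk, rfl⟩
      exact Ideal.mul_mem_left _ _ (Ideal.subset_span ⟨_, ⟨k, hk, rfl⟩, rfl⟩)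
    · rintro _ ⟨_, ⟨k, hk, rfl⟩, rfl⟩
      rw [show X (Sum.inr k) = (-1) ^ (k : ℕ) * g4Coeff r K k by
        rw [g4Coeff, ← mul_assoc, ← mul_pow, neg_one_mul, neg_neg, one_pow, one_mul]]
      exact Ideal.mul_mem_left _ _ (Ideal.subset_span ⟨k, hk, rfl⟩)
  rw [hspan, g4Coeff]
  exact ((isUnit_neg_one.pow _).isSMulRegular _).mul (isSMulRegular_X_quotient_span_X (by simp))

theorem g4_isHomogeneous (i : Fin r) : (g4 r K i).IsHomogeneous 2 := by
  refine IsHomogeneous.sum _ _ _ fun k _ => ?_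
  rw [show ((-1 : MvPolynomial (X4Var r) K) ^ (k : ℕ)) = C ((-1) ^ (k : ℕ)) by simp]
  exact (isHomogeneous_C _ _).mul ((isHomogeneous_X _ _).mul (isHomogeneous_X _ _))

end Relations

theorem g4_isRegular_general (r : ℕ) (K : Type*) [Field K] :
    RingTheory.Sequence.IsRegular (MvPolynomial (X4Var r) K)
      (List.ofFn (g4 r K)) ∧
    ∀ i : Fin r, (g4 r K i).IsHomogeneous 2 := by
  refine ⟨?_, g4_isHomogeneous r K⟩
  let e := (sumAlgEquiv K (Fin (r + 1) × Fin r)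
    ({p : Fin r × Fin r // p.1 < p.2} ⊕ Fin (r + 1))).toRingEquiv
  rw [← e.isRegular_map_iff, List.map_ofFn,
    show ⇑e ∘ g4 r K = columnForm (g4Coeff r K) ∘ Fin.rev from funext (sumAlgEquiv_g4 r K)]
  exact isRegular_ofFn_columnForm _ (isWeaklyRegular_ofFn_g4Coeff r K) (Nat.le_succ r)
    Fin.rev_injective

/-- the relations `g_1, …, g_r` form a regular sequence in
`S = K[X₄, y_1, …, y_{r+1}]`; in particular the ideal `J = ⟨g_1, …, g_r⟩`
is a complete intersection generated by quadrics. -/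
theorem g4_isRegular (r : ℕ) (K : Type*) [Field K] [CharZero K] :
    RingTheory.Sequence.IsRegular (MvPolynomial (X4Var r) K)
      (List.ofFn (g4 r K)) ∧
    ∀ i : Fin r, (g4 r K i).IsHomogeneous 2 :=
  g4_isRegular_general r K
end

section
/- Let n = 2r+1 with r ≥ 1 and let p_1, …, p_{r+1} denote the r+1 squarefree monomial generators of the Pfaffian ideal Pf_{n−1}(X_3) of the tridiagonal skew-symmetric matrix (p_1 = ∏_{k=1}^r x_{2k,2k+1}, and p_{(i+1)/2 + 1} for odd i ≥ 3 as in the paper). Then for consecutive generators, the Rees relations are linear: lcm(p_j, p_{j+1})/p_j · p_j − lcm(p_j, p_{j+1})/p_{j+1} · p_{j+1} = 0 with lcm(p_j, p_{j+1})/p_j = x_{2j−1, 2j} and lcm(p_j, p_{j+1})/p_{j+1} = x_{2j, 2j+1} for 1 ≤ j ≤ r; i.e. x_{2j−1,2j} · p_j = x_{2j,2j+1} · p_{j+1}. -/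
open MvPolynomial

variable {K : Type*} [Field K]

/-- for consecutive generators of the Pfaffian ideal of the
tridiagonal skew-symmetric matrix, the Rees relations are linear:
`x_{2j−1,2j} · p_j = x_{2j,2j+1} · p_{j+1}` for `1 ≤ j ≤ r` (here `p_j`
corresponds to `pgen r K (j−1)` with zero-based indexing). -/
theorem tridiagonal_pfaffian_consecutive_relation
    (r : ℕ) (hr : 1 ≤ r) (j : Fin r) :
    xvar r K (2 * j.val) * pgen r K j.castSucc =
      xvar r K (2 * j.val + 1) * pgen r K j.succ := by
  have hjr : j.val < r := j.isLt
  simp only [pgen, Fin.coe_castSucc, Fin.val_succ, Nat.succ_ne_zero, if_false]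
  rcases Nat.eq_zero_or_pos j.val with h0 | hpos
  · simp only [h0, if_pos rfl]
    rw [Finset.prod_eq_prod_Ico_succ_bot (by omega : 0 < r)
      (fun t => xvar r K (2 * t + 1))]
    rw [Finset.range_eq_Ico, Finset.prod_eq_prod_Ico_succ_bot (by omega : 0 < r)
      (fun t => xvar r K (2 * t + 1))]
    norm_num
    ring
  · rw [if_neg (by omega)]
    rw [Finset.prod_eq_prod_Ico_succ_bot (by omega : j.val < r)
      (fun t => xvar r K (2 * t + 1)),
      Finset.prod_Ico_succ_top (by omega : 1 ≤ j.val) (fun t => xvar r K (2 * t))]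
    ring
end
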